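/- arXiv:math/0602394 — 3 statements merged into one kernel-verified Lean document; each statement's English description precedes it below -/
import Mathlib

section
/- For every ε > 0 there exists N such that for all n ≥ N, the set O_n = {(a/n, b/n) mod 1 : a, b, n ∈ Z, gcd(a,b,n) = 1} is ε-dense in the torus T² = R²/Z². -/
/-!
Write `ω` for the number of prime factors of `n`. In any `K × K` box of integer points, a prime
`p ∣ n` divides both coordinates of at most `(K/p + 1)²` points; since `∑ 1/p² < π²/6 - 1 < 2/3`,
these points cannot fill a box of side `K = 3(ω + 1)`. So the box with corner `(⌊n u⌋, ⌊n v⌋)`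
and side `K` contains `(a, b)` with `gcd(a, b, n) = 1`, and `(a/n, b/n)` is within `K/n` of
`(u, v)`. As `2^ω ≤ n`, this is `O(log n / n)`.
-/

open Finset Real Filter Topology

lemma card_filter_dvd_Ico_add_le {r : ℕ} (hr : 0 < r) (a : ℤ) (K : ℕ) :
    (#{x ∈ Ico a (a + K) | (r : ℤ) ∣ x} : ℝ) ≤ K / r + 1 := by
  have hq : ((#{x ∈ Ico a (a + K) | (r : ℤ) ∣ x} : ℤ) : ℚ) ≤ K / r + 1 := by
    have hceil : (⌈((a + K : ℤ) : ℚ) / (r : ℤ)⌉ : ℚ) - ⌈(a : ℚ) / (r : ℤ)⌉ < K / r + 1 := by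
      have hb := Int.ceil_lt_add_one (((a + K : ℤ) : ℚ) / (r : ℤ))
      have ha := Int.le_ceil ((a : ℚ) / (r : ℤ))
      push_cast [add_div] at hb ha ⊢
      linarith
    rw [Int.Ico_filter_dvd_card a (a + K) (by exact_mod_cast hr)]
    push_cast at hceil ⊢
    exact max_le hceil.le (by positivity)
  have := (Rat.cast_le (K := ℝ)).mpr hq
  push_cast at this
  exact_mod_cast this

lemma sum_one_div_sq_lt_two_thirds (F : Finset ℕ) (hF : ∀ p ∈ F, 2 ≤ p) :
    ∑ p ∈ F, 1 / (p : ℝ) ^ 2 < 2 / 3 := by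
  have h1 : 1 ∉ F := fun h => by have := hF 1 h; omega
  have hsum : ∑ p ∈ insert 1 F, 1 / (p : ℝ) ^ 2 ≤ π ^ 2 / 6 :=
    sum_le_hasSum _ (fun _ _ => by positivity) hasSum_zeta_two
  rw [sum_insert h1] at hsum
  nlinarith [pi_lt_d2, pi_pos]

lemma sum_div_add_one_sq_le (P : Finset ℕ) (hP : ∀ p ∈ P, 2 ≤ p) {K : ℝ} (hK : 0 ≤ K) :
    ∑ p ∈ P, (K / p + 1) ^ 2 ≤ 2 / 3 * K ^ 2 + #P * (K + 1) := by
  have hterm : ∀ p ∈ P, (K / p + 1) ^ 2 ≤ K ^ 2 * (1 / (p : ℝ) ^ 2) + (K + 1) := by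
    intro p hp
    have hp2 : (2 : ℝ) ≤ p := by exact_mod_cast hP p hp
    have : 2 * (K / p) ≤ K := by
      rw [mul_div_assoc', div_le_iff₀ (by linarith)]
      nlinarith
    have e : (K / p + 1) ^ 2 = K ^ 2 * (1 / (p : ℝ) ^ 2) + 2 * (K / p) + 1 := by
      field_simp
      ring
    linarith
  calc ∑ p ∈ P, (K / p + 1) ^ 2 ≤ ∑ p ∈ P, (K ^ 2 * (1 / (p : ℝ) ^ 2) + (K + 1)) :=
        sum_le_sum hterm
    _ = K ^ 2 * ∑ p ∈ P, 1 / (p : ℝ) ^ 2 + #P * (K + 1) := by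
        rw [sum_add_distrib, ← mul_sum, sum_const, nsmul_eq_mul]
    _ ≤ 2 / 3 * K ^ 2 + #P * (K + 1) := by
        nlinarith [sum_one_div_sq_lt_two_thirds P hP, sq_nonneg K]

lemma exists_mem_Ico_forall_not_dvd_and_dvd (P : Finset ℕ) (hP : ∀ p ∈ P, 2 ≤ p) (A B : ℤ) :
    ∃ a ∈ Ico A (A + 3 * (#P + 1)), ∃ b ∈ Ico B (B + 3 * (#P + 1)),
      ∀ p ∈ P, ¬((p : ℤ) ∣ a ∧ (p : ℤ) ∣ b) := by
  set K : ℕ := 3 * (#P + 1) with hK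
  by_contra! hbad
  have hcover : Ico A (A + K) ×ˢ Ico B (B + K) ⊆ P.biUnion fun p =>
      {a ∈ Ico A (A + K) | (p : ℤ) ∣ a} ×ˢ {b ∈ Ico B (B + K) | (p : ℤ) ∣ b} := by
    rintro ⟨a, b⟩ hab
    rw [mem_product] at hab
    obtain ⟨p, hp, hpa, hpb⟩ := hbad a (by exact_mod_cast hab.1) b (by exact_mod_cast hab.2)
    simp only [mem_biUnion, mem_product, mem_filter]
    exact ⟨p, hp, ⟨hab.1, hpa⟩, hab.2, hpb⟩
  have hcount := (card_le_card hcover).trans card_biUnion_le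
  simp only [card_product, Int.card_Ico, add_sub_cancel_left, Int.toNat_natCast] at hcount
  have hK2 : (K : ℝ) ^ 2 ≤ 2 / 3 * (K : ℝ) ^ 2 + #P * (K + 1) :=
    calc (K : ℝ) ^ 2 = ((K * K : ℕ) : ℝ) := by push_cast; ring
      _ ≤ ∑ p ∈ P, (#{a ∈ Ico A (A + K) | (p : ℤ) ∣ a} *
          #{b ∈ Ico B (B + K) | (p : ℤ) ∣ b} : ℝ) := by exact_mod_cast hcount
      _ ≤ ∑ p ∈ P, ((K : ℝ) / p + 1) ^ 2 := by
        gcongr with p hp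
        have hp0 : 0 < p := by have := hP p hp; omega
        rw [sq]
        gcongr
        · exact card_filter_dvd_Ico_add_le hp0 A K
        · exact card_filter_dvd_Ico_add_le hp0 B K
      _ ≤ 2 / 3 * (K : ℝ) ^ 2 + #P * (K + 1) := sum_div_add_one_sq_le P hP K.cast_nonneg
  have hKval : (K : ℝ) = 3 * (#P + 1) := by rw [hK]; push_cast; ring
  rw [hKval] at hK2
  nlinarith

lemma exists_mem_Ico_gcd_gcd_eq_one {n : ℕ} (hn : n ≠ 0) (A B : ℤ) :
    ∃ a ∈ Ico A (A + 3 * (#n.primeFactors + 1)), ∃ b ∈ Ico B (B + 3 * (#n.primeFactors + 1)),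
      Int.gcd (Int.gcd a b) n = 1 := by
  obtain ⟨a, ha, b, hb, hab⟩ := exists_mem_Ico_forall_not_dvd_and_dvd n.primeFactors
    (fun p hp => (Nat.prime_of_mem_primeFactors hp).two_le) A B
  refine ⟨a, ha, b, hb, ?_⟩
  by_contra h
  rw [Int.gcd_natCast_natCast] at h
  obtain ⟨p, hp, hpab, hpn⟩ := Nat.Prime.not_coprime_iff_dvd.mp h
  have hpab' : (p : ℤ) ∣ Int.gcd a b := Int.natCast_dvd_natCast.mpr hpab
  exact hab p (Nat.mem_primeFactors.mpr ⟨hp, hpn, hn⟩)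
    ⟨hpab'.trans (Int.gcd_dvd_left a b), hpab'.trans (Int.gcd_dvd_right a b)⟩

lemma two_pow_card_primeFactors_le {n : ℕ} (hn : n ≠ 0) : 2 ^ #n.primeFactors ≤ n :=
  (pow_card_le_prod _ id _ fun _ hp => (Nat.prime_of_mem_primeFactors hp).two_le).trans
    (Nat.le_of_dvd (Nat.pos_of_ne_zero hn) (Nat.prod_primeFactors_dvd n))

lemma tendsto_card_primeFactors_div_atTop :
    Tendsto (fun n : ℕ => (#n.primeFactors : ℝ) / n) atTop (𝓝 0) := by
  have hlog : Tendsto (fun n : ℕ => log n / n / log 2) atTop (𝓝 0) := by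
    simpa using ((tendsto_pow_log_div_mul_add_atTop 1 0 1 one_ne_zero).comp
      tendsto_natCast_atTop_atTop).div_const (log 2)
  refine squeeze_zero' (Eventually.of_forall fun n => by positivity) ?_ hlog
  filter_upwards [eventually_ne_atTop 0] with n hn
  have hlog2 : (#n.primeFactors : ℝ) * log 2 ≤ log n := by
    rw [← Real.log_pow]
    exact log_le_log (by positivity) (by exact_mod_cast two_pow_card_primeFactors_le hn)
  calc (#n.primeFactors : ℝ) / n ≤ log n / log 2 / n := by
        gcongr
        rwa [le_div_iff₀ (log_pos one_lt_two)]
    _ = log n / n / log 2 := div_right_comm _ _ _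

lemma dist_coe_div_le_of_mem_Ico {n K : ℕ} (hn : 0 < n) (hK : 1 ≤ K) (u : ℝ) {a : ℤ}
    (ha : a ∈ Ico ⌊n * u⌋ (⌊n * u⌋ + K)) :
    dist (u : AddCircle (1 : ℝ)) ((a / n : ℝ) : AddCircle (1 : ℝ)) ≤ K / n := by
  rw [mem_Ico] at ha
  have hn' : (0 : ℝ) < n := by exact_mod_cast hn
  have hlo : (⌊n * u⌋ : ℝ) ≤ a := by exact_mod_cast ha.1
  have hhi : (a : ℝ) < ⌊n * u⌋ + K := by exact_mod_cast ha.2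
  have hK' : (1 : ℝ) ≤ K := by exact_mod_cast hK
  have hfloor := Int.floor_le ((n : ℝ) * u)
  have hfloor' := Int.lt_floor_add_one ((n : ℝ) * u)
  calc dist (u : AddCircle (1 : ℝ)) ((a / n : ℝ) : AddCircle (1 : ℝ))
      ≤ |u - a / n| := by
        rw [dist_eq_norm, ← AddCircle.coe_sub, ← Real.norm_eq_abs]
        exact QuotientAddGroup.norm_mk_le_norm
    _ = |n * u - a| / n := by
        rw [← abs_of_pos hn', ← abs_div, abs_of_pos hn']
        congr 1
        field_simp
    _ ≤ K / n := by
        gcongr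
        rw [abs_le]
        constructor <;> linarith

/-- For every `ε > 0`, for all sufficiently large `n`, the set
`O_n = {(a/n, b/n) mod 1 : gcd(a,b,n) = 1}` is `ε`-dense in the torus. -/
theorem stmt2 (ε : ℝ) (hε : 0 < ε) :
    ∃ N : ℕ, ∀ n : ℕ, N ≤ n →
      ∀ x : AddCircle (1 : ℝ) × AddCircle (1 : ℝ),
        ∃ a b : ℤ, Int.gcd (Int.gcd a b) n = 1 ∧
          dist x ((((a : ℝ) / n : ℝ), (((b : ℝ) / n : ℝ) : AddCircle (1 : ℝ))) :
            AddCircle (1 : ℝ) × AddCircle (1 : ℝ)) ≤ ε := by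
  have hside : Tendsto (fun n : ℕ => ((3 * (#n.primeFactors + 1) : ℕ) : ℝ) / n) atTop (𝓝 0) := by
    simpa [mul_add, add_div, mul_div_assoc] using
      (tendsto_card_primeFactors_div_atTop.const_mul 3).add (tendsto_const_div_atTop_nhds_zero_nat 3)
  obtain ⟨N, hN⟩ := eventually_atTop.mp
    ((hside.eventually (ge_mem_nhds hε)).and (eventually_gt_atTop 0))
  refine ⟨N, fun n hn ⟨x, y⟩ => ?_⟩
  obtain ⟨hsmall, hn0⟩ := hN n hn
  obtain ⟨u, rfl⟩ := QuotientAddGroup.mk_surjective x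
  obtain ⟨v, rfl⟩ := QuotientAddGroup.mk_surjective y
  obtain ⟨a, ha, b, hb, hgcd⟩ := exists_mem_Ico_gcd_gcd_eq_one hn0.ne' ⌊n * u⌋ ⌊n * v⌋
  refine ⟨a, b, hgcd, ?_⟩
  rw [Prod.dist_eq]
  exact max_le ((dist_coe_div_le_of_mem_Ico hn0 (by omega) u (by exact_mod_cast ha)).trans hsmall)
    ((dist_coe_div_le_of_mem_Ico hn0 (by omega) v (by exact_mod_cast hb)).trans hsmall)
end

section
/- Let A, B, C be integers, not all zero, with gcd(A,B,C) = 1, and let φ, θ be reals with Aφ + Bθ = C. Write D = gcd(A,B), A' = A/D, B' = B/D. If |A'| > 1/ε, or |B'| > 1/ε, or D > 1/ε (with the convention for the degenerate cases A'=0 or B'=0 that the loops are |B| or |A| equally spaced horizontal/vertical circles), then the union of loops ⋃_{k=0}^{D−1} {(x,y) ∈ T² : A'x + B'y ≡ k/D mod 1} is ε-dense in T². -/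
/-!
Write `D = gcd(A, B)` and `(a, b) = (A / D, B / D)`. Given `(x, y)`, moving `x` by `t` changes
`a x + b y` by `a t`, and every real lies within `1 / (2D)` of the grid `ℤ / D`, so some loop is
within `1 / (2 D |a|)` of `(x, y)`; symmetrically with `y` when `b ≠ 0`. Since `a` and `b` are
coprime integers, not both zero, each of the three hypotheses gives `D |a| > 1 / ε` or
`D |b| > 1 / ε` for a nonzero one of them.
-/

lemma exists_int_abs_div_sub_le {D : ℝ} (hD : 0 < D) (v : ℝ) :
    ∃ k : ℤ, |(k : ℝ) / D - v| ≤ 1 / (2 * D) := by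
  refine ⟨round (D * v), ?_⟩
  calc |(round (D * v) : ℝ) / D - v| = |D * v - round (D * v)| / D := by
        rw [← abs_of_pos hD, ← abs_div, abs_of_pos hD, abs_sub_comm]
        congr 1
        field_simp
    _ ≤ 1 / 2 / D := by gcongr; exact abs_sub_round _
    _ = 1 / (2 * D) := by rw [div_div]

lemma AddCircle.dist_coe_add_le (x t : ℝ) :
    dist (x : AddCircle (1 : ℝ)) (x + t : ℝ) ≤ |t| := by
  rw [dist_eq_norm, ← AddCircle.coe_sub, sub_add_cancel_left, ← abs_neg t, ← Real.norm_eq_abs]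
  exact QuotientAddGroup.norm_mk_le_norm

def torusLoops (a b : ℤ) (D : ℝ) : Set (AddCircle (1 : ℝ) × AddCircle (1 : ℝ)) :=
  {q | ∃ k : ℤ, a • q.1 + b • q.2 = ((k / D : ℝ) : AddCircle (1 : ℝ))}

lemma swap_mem_torusLoops {a b : ℤ} {D : ℝ} {q : AddCircle (1 : ℝ) × AddCircle (1 : ℝ)} :
    q.swap ∈ torusLoops b a D ↔ q ∈ torusLoops a b D := by
  simp only [torusLoops, Set.mem_ofPred_eq, Prod.fst_swap, Prod.snd_swap, add_comm]

lemma exists_mem_torusLoops_dist_le {a : ℤ} (ha : a ≠ 0) (b : ℤ) {D : ℝ} (hD : 0 < D)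
    (p : AddCircle (1 : ℝ) × AddCircle (1 : ℝ)) :
    ∃ q ∈ torusLoops a b D, dist p q ≤ 1 / (2 * (D * |(a : ℝ)|)) := by
  obtain ⟨x, hx⟩ := QuotientAddGroup.mk_surjective p.1
  obtain ⟨y, hy⟩ := QuotientAddGroup.mk_surjective p.2
  obtain ⟨k, hk⟩ := exists_int_abs_div_sub_le hD (a * x + b * y)
  have ha' : (a : ℝ) ≠ 0 := Int.cast_ne_zero.mpr ha
  set t := ((k : ℝ) / D - (a * x + b * y)) / a
  refine ⟨(((x + t : ℝ) : AddCircle (1 : ℝ)), p.2), ⟨k, ?_⟩, ?_⟩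
  · rw [← hy, ← AddCircle.coe_zsmul, ← AddCircle.coe_zsmul, ← AddCircle.coe_add,
      zsmul_eq_mul, zsmul_eq_mul]
    congr 1
    linear_combination mul_div_cancel₀ ((k : ℝ) / D - (a * x + b * y)) ha'
  · rw [Prod.dist_eq, dist_self, max_eq_left dist_nonneg, ← hx]
    calc dist (x : AddCircle (1 : ℝ)) (x + t : ℝ) ≤ |t| := AddCircle.dist_coe_add_le x t
      _ ≤ 1 / (2 * D) / |(a : ℝ)| := by rw [abs_div]; gcongr
      _ = 1 / (2 * (D * |(a : ℝ)|)) := by rw [div_div, mul_assoc]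

lemma exists_ne_zero_lt_mul_abs {a b : ℤ} {d r : ℝ} (hab : a ≠ 0 ∨ b ≠ 0) (hd : 1 ≤ d)
    (hr : 0 ≤ r) (h : r < |(a : ℝ)| ∨ r < |(b : ℝ)| ∨ r < d) :
    (a ≠ 0 ∧ r < d * |(a : ℝ)|) ∨ (b ≠ 0 ∧ r < d * |(b : ℝ)|) := by
  have le_mul_abs (c : ℤ) (hc : c ≠ 0) : |(c : ℝ)| ≤ d * |(c : ℝ)| ∧ d ≤ d * |(c : ℝ)| := by
    have : (1 : ℝ) ≤ |(c : ℝ)| := by exact_mod_cast Int.one_le_abs hc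
    constructor <;> nlinarith
  have ne_zero_of_lt (c : ℤ) (hc : r < |(c : ℝ)|) : c ≠ 0 := by rintro rfl; simp at hc; linarith
  rcases h with h | h | h
  · exact .inl ⟨ne_zero_of_lt a h, h.trans_le (le_mul_abs a (ne_zero_of_lt a h)).1⟩
  · exact .inr ⟨ne_zero_of_lt b h, h.trans_le (le_mul_abs b (ne_zero_of_lt b h)).1⟩
  · exact hab.imp (fun ha => ⟨ha, h.trans_le (le_mul_abs a ha).2⟩)
      (fun hb => ⟨hb, h.trans_le (le_mul_abs b hb).2⟩)

lemma Prod.dist_swap {α β : Type*} [PseudoMetricSpace α] [PseudoMetricSpace β] (p q : α × β) :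
    dist p.swap q.swap = dist p q := by
  simp only [Prod.dist_eq, Prod.fst_swap, Prod.snd_swap, max_comm]

theorem stmt5_general (A B : ℤ)
    (ε : ℝ) (hε : 0 < ε)
    (hbig : |(A / (Int.gcd A B : ℤ) : ℤ)| > (1 : ℝ) / ε ∨
            |(B / (Int.gcd A B : ℤ) : ℤ)| > (1 : ℝ) / ε ∨
            ((Int.gcd A B : ℤ) : ℝ) > 1 / ε) :
    ∀ p : AddCircle (1 : ℝ) × AddCircle (1 : ℝ),
      ∃ q ∈ {q : AddCircle (1 : ℝ) × AddCircle (1 : ℝ) | ∃ k : ℤ,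
        (A / (Int.gcd A B : ℤ)) • q.1 + (B / (Int.gcd A B : ℤ)) • q.2
          = (((k : ℝ) / ((Int.gcd A B : ℤ) : ℝ) : ℝ) : AddCircle (1 : ℝ))},
      dist p q ≤ ε := by
  intro p
  set D := Int.gcd A B
  -- If `D = 0` then `A / D = B / D = 0`, so `hbig` fails.
  have hD : 0 < D := Nat.pos_of_ne_zero fun hD => by simp [hD] at hbig; linarith [one_div_pos.mpr hε]
  have hAB : A / (D : ℤ) ≠ 0 ∨ B / (D : ℤ) ≠ 0 := by
    by_contra! h
    have hcop : Int.gcd (A / (D : ℤ)) (B / (D : ℤ)) = 1 := Int.gcd_div_gcd_div_gcd hD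
    simp [h] at hcop
  have hDR : (0 : ℝ) < (D : ℤ) := by exact_mod_cast hD
  push_cast [gt_iff_lt, Int.cast_abs] at hbig
  have hclose {c : ℝ} (hc : 1 / ε < D * |c|) : 1 / (2 * (D * |c|)) ≤ ε := by
    rw [div_le_iff₀ (by linarith [one_div_pos.mpr hε])]
    rw [div_lt_iff₀ hε] at hc
    nlinarith
  rcases exists_ne_zero_lt_mul_abs hAB (by exact_mod_cast hD) (one_div_pos.mpr hε).le hbig with ⟨ha, h⟩ | ⟨hb, h⟩
  · obtain ⟨q, hq, hpq⟩ := exists_mem_torusLoops_dist_le ha (B / D) hDR p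
    exact ⟨q, hq, hpq.trans (hclose h)⟩
  · obtain ⟨q, hq, hpq⟩ := exists_mem_torusLoops_dist_le hb (A / D) hDR p.swap
    refine ⟨q.swap, swap_mem_torusLoops.mpr hq, ?_⟩
    rw [← Prod.dist_swap]
    exact hpq.trans (hclose h)

/-- Let `A, B, C` be integers, not all zero, with `gcd(A,B,C) = 1`, and
`Aφ + Bθ = C`. Put `D = gcd(A,B)`, `A' = A/D`, `B' = B/D`. If `|A'| > 1/ε` or
`|B'| > 1/ε` or `D > 1/ε`, then the union of the torus-loops
`{(x,y) : A'x + B'y ≡ k/D mod 1}` over `k` is `ε`-dense in the torus. -/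
theorem stmt5 (A B C : ℤ) (hAB : ¬ (A = 0 ∧ B = 0))
    (hgcd : Int.gcd (Int.gcd A B : ℤ) C = 1)
    (φ θ : ℝ) (heq : (A : ℝ) * φ + (B : ℝ) * θ = (C : ℝ))
    (ε : ℝ) (hε : 0 < ε)
    (hbig : |(A / (Int.gcd A B : ℤ) : ℤ)| > (1 : ℝ) / ε ∨
            |(B / (Int.gcd A B : ℤ) : ℤ)| > (1 : ℝ) / ε ∨
            ((Int.gcd A B : ℤ) : ℝ) > 1 / ε) :
    ∀ p : AddCircle (1 : ℝ) × AddCircle (1 : ℝ),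
      ∃ q ∈ {q : AddCircle (1 : ℝ) × AddCircle (1 : ℝ) | ∃ k : ℤ,
        (A / (Int.gcd A B : ℤ)) • q.1 + (B / (Int.gcd A B : ℤ)) • q.2
          = (((k : ℝ) / ((Int.gcd A B : ℤ) : ℝ) : ℝ) : AddCircle (1 : ℝ))},
      dist p q ≤ ε :=
  stmt5_general A B ε hε hbig
end

section
/- Given two cone points p_h, p_v of a translation surface with cone angles 2π·o_h and 2π·o_v (o_h, o_v positive integers), the point (p_h, p_v) in the product, for any fixed slope-α foliation, lies on exactly gcd(o_h, o_v) distinct local leaves, and on each leaf it is a cone point of order lcm(o_h, o_v); in particular o_h · o_v = lcm(o_h,o_v) · gcd(o_h,o_v) counts leaves times order. -/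
/-!
Simultaneous shifts by `θ` are translations by the elements of the cyclic subgroup `H` of
`ℤ/o_h × ℤ/o_v` generated by `(1, 1)`, so the local leaves are the cosets of `H`. Each coset has
`|H| = addOrderOf (1, 1) = lcm(o_h, o_v)` elements, and by Lagrange there are
`o_h o_v / lcm(o_h, o_v) = gcd(o_h, o_v)` of them.
-/

open Pointwise

section
variable {G : Type*} [AddGroup G]

theorem Set.range_add_zsmul (g a : G) :
    Set.range (fun θ : ℤ => g + θ • a) = g +ᵥ (AddSubgroup.zmultiples a : Set G) := by
  ext x
  simp only [Set.mem_range, Set.mem_vadd_set, SetLike.mem_coe, AddSubgroup.mem_zmultiples_iff,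
    vadd_eq_add]
  constructor
  · rintro ⟨θ, rfl⟩
    exact ⟨θ • a, ⟨θ, rfl⟩, rfl⟩
  · rintro ⟨_, ⟨θ, rfl⟩, rfl⟩
    exact ⟨θ, rfl⟩

theorem AddSubgroup.card_vadd_coe (H : AddSubgroup G) (g : G) :
    Nat.card (g +ᵥ (H : Set G)) = Nat.card H :=
  Nat.card_congr (AddSubgroup.leftCosetEquivAddSubgroup g)

theorem QuotientAddGroup.preimage_mk_singleton_mk (H : AddSubgroup G) (g : G) :
    QuotientAddGroup.mk ⁻¹' {(g : G ⧸ H)} = g +ᵥ (H : Set G) := by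
  ext x
  rw [Set.mem_preimage, Set.mem_singleton_iff, eq_comm, QuotientAddGroup.eq,
    mem_leftAddCoset_iff, SetLike.mem_coe]

theorem AddSubgroup.card_range_vadd_coe (H : AddSubgroup G) :
    Nat.card (Set.range fun g : G => g +ᵥ (H : Set G)) = H.index := by
  have hfactor : (fun g : G => g +ᵥ (H : Set G)) =
      (fun q : G ⧸ H => QuotientAddGroup.mk ⁻¹' {q}) ∘ QuotientAddGroup.mk :=
    funext fun g => (QuotientAddGroup.preimage_mk_singleton_mk H g).symm
  have hinj : Function.Injective fun q : G ⧸ H => (QuotientAddGroup.mk ⁻¹' {q} : Set G) :=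
    (Set.preimage_injective.mpr QuotientAddGroup.mk_surjective).comp Set.singleton_injective
  rw [hfactor, QuotientAddGroup.mk_surjective.range_comp, Nat.card_range_of_injective hinj,
    AddSubgroup.index]

end

namespace ZMod

theorem addOrderOf_one_one (m n : ℕ) : addOrderOf ((1, 1) : ZMod m × ZMod n) = m.lcm n := by
  rw [Prod.addOrderOf, addOrderOf_one, addOrderOf_one]

theorem index_zmultiples_one_one {m n : ℕ} (hm : 0 < m) (hn : 0 < n) :
    (AddSubgroup.zmultiples ((1, 1) : ZMod m × ZMod n)).index = m.gcd n := by
  have hlagrange := (AddSubgroup.zmultiples ((1, 1) : ZMod m × ZMod n)).index_mul_card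
  rw [Nat.card_zmultiples, addOrderOf_one_one, Nat.card_prod, Nat.card_zmod, Nat.card_zmod,
    ← Nat.gcd_mul_lcm m n] at hlagrange
  exact Nat.eq_of_mul_eq_mul_right (Nat.lcm_pos hm hn) hlagrange

theorem range_add_intCast_prod (m n : ℕ) (i : ZMod m) (j : ZMod n) :
    (Set.range fun θ : ℤ => ((i + (θ : ZMod m), j + (θ : ZMod n)) : ZMod m × ZMod n)) =
      (i, j) +ᵥ (AddSubgroup.zmultiples ((1, 1) : ZMod m × ZMod n) : Set (ZMod m × ZMod n)) := by
  rw [← Set.range_add_zsmul]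
  simp only [Prod.smul_mk, zsmul_one, Prod.mk_add_mk]

end ZMod

/-- Combinatorial cone-point count: local leaves near `(p_h,p_v)` are indexed by
pairs `(i_h,i_v) ∈ ℤ/o_h × ℤ/o_v` modulo simultaneous shift. Each shift-orbit
has size `lcm(o_h,o_v)`, there are `gcd(o_h,o_v)` orbits, and
`o_h · o_v = lcm · gcd`. -/
theorem stmt11 (oh ov : ℕ) (h1 : 0 < oh) (h2 : 0 < ov) :
    (∀ (i : ZMod oh) (j : ZMod ov),
      Nat.card (Set.range fun θ : ℤ =>
        ((i + (θ : ZMod oh), j + (θ : ZMod ov)) : ZMod oh × ZMod ov))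
        = Nat.lcm oh ov) ∧
    Nat.card {S : Set (ZMod oh × ZMod ov) | ∃ (i : ZMod oh) (j : ZMod ov),
        S = Set.range fun θ : ℤ => (i + (θ : ZMod oh), j + (θ : ZMod ov))}
      = Nat.gcd oh ov ∧
    oh * ov = Nat.lcm oh ov * Nat.gcd oh ov := by
  set H := AddSubgroup.zmultiples ((1, 1) : ZMod oh × ZMod ov)
  have horbits : {S : Set (ZMod oh × ZMod ov) | ∃ (i : ZMod oh) (j : ZMod ov),
      S = Set.range fun θ : ℤ => (i + (θ : ZMod oh), j + (θ : ZMod ov))} =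
      Set.range fun g : ZMod oh × ZMod ov => g +ᵥ (H : Set (ZMod oh × ZMod ov)) := by
    ext S
    simp only [ZMod.range_add_intCast_prod, Set.mem_ofPred_eq, Set.mem_range, Prod.exists, eq_comm]
    rfl
  refine ⟨fun i j => ?_, ?_, (Nat.gcd_mul_lcm oh ov).symm.trans (Nat.mul_comm _ _)⟩
  · rw [ZMod.range_add_intCast_prod, AddSubgroup.card_vadd_coe, Nat.card_zmultiples,
      ZMod.addOrderOf_one_one]
  · rw [horbits, AddSubgroup.card_range_vadd_coe, ZMod.index_zmultiples_one_one h1 h2]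
end
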